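/- arXiv:1907.02296 — 4 statements merged into one kernel-verified Lean document; each statement's English description precedes it below -/
import Mathlib

section
/- Independence of local runs: if dom(a) ∩ dom(b) = ∅ and (q,v) =ab=> (q',v') is a local run, then (q,v) =ba=> (q',v') is also a local run (reaching the same state and the same local valuation). Moreover, if (q,v) =a=> (q_a,v_a) and (q,v) =b=> (q_b,v_b) are local runs, then there exist q_ab, v_ab with a local run (q,v) =ab=> (q_ab, v_ab). -/
open Classical

/-- Comparison operators appearing in guards `x ~ c`. -/
inductive Cmp | lt | le | eq | ge | gt

def Cmp.sat : Cmp → ℝ → ℤ → Prop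
  | .lt, r, c => r < (c : ℝ)
  | .le, r, c => r ≤ (c : ℝ)
  | .eq, r, c => r = (c : ℝ)
  | .ge, r, c => (c : ℝ) ≤ r
  | .gt, r, c => (c : ℝ) < r

/-- A guard: a finite conjunction of constraints `x ~ c` on clocks. -/
abbrev Guard (Clock : Type) := List (Clock × Cmp × ℤ)

/-- A difference constraint `y₁ - y₂ ◁ c` over variables `V`;
the boolean is `true` for strict `<` and `false` for `≤`. -/
abbrev DiffConstraint (V : Type) := V × V × Bool × ℤ

/-- Satisfaction of a difference constraint. -/
def csat {V : Type} (v : V → ℝ) (c : DiffConstraint V) : Prop :=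
  if c.2.2.1 then v c.1 - v c.2.1 < (c.2.2.2 : ℝ) else v c.1 - v c.2.1 ≤ (c.2.2.2 : ℝ)

/-- A network of timed automata: `k` processes, each owning its clocks and
locations; each action `b` has a domain `dom b` of synchronizing processes, and
for each process in the domain a set of `b`-transitions (location, guard, reset
set, target location), whose guards and resets only mention own clocks. -/
structure Network where
  k : ℕ
  kpos : 0 < k
  Clock : Type
  [clockFin : Fintype Clock]
  owner : Clock → Fin k
  Act : Type
  dom : Act → Finset (Fin k)
  Loc : Fin k → Type
  init : ∀ p, Loc p
  Trans : ∀ (_ : Act) (p : Fin k), Set (Loc p × Guard Clock × Set Clock × Loc p)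
  trans_wf : ∀ b p tr, tr ∈ Trans b p →
    (∀ c ∈ tr.2.1, owner c.1 = p) ∧ (∀ x ∈ tr.2.2.1, owner x = p)

attribute [instance] Network.clockFin

namespace Network

variable (N : Network)

/-- Global (discrete) states of the network. -/
abbrev State := ∀ p, N.Loc p

/-- Variables of local valuations: offset variables `x̃` and reference clocks `t_p`. -/
abbrev LVar := N.Clock ⊕ Fin N.k

/-- Variables of global valuations: offset variables `x̃` and the global reference clock `t`. -/
abbrev GVar := N.Clock ⊕ Unit

abbrev LVal := N.LVar → ℝ

abbrev GVal := N.GVar → ℝ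

/-- A local valuation: nonnegative, and each offset is below the owner's reference clock. -/
def IsLVal (v : N.LVal) : Prop :=
  (∀ y, 0 ≤ v y) ∧ ∀ x : N.Clock, v (.inl x) ≤ v (.inr (N.owner x))

/-- A global valuation: nonnegative, and each offset is below the global time `t`. -/
def IsGVal (v : N.GVal) : Prop :=
  (∀ y, 0 ≤ v y) ∧ ∀ x : N.Clock, v (.inl x) ≤ v (.inr ())

/-- Satisfaction of a guard by a local valuation: the value of clock `x` is
`v t_p - v x̃` where `p` owns `x`. -/
def lgsat (v : N.LVal) (g : Guard N.Clock) : Prop :=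
  ∀ c ∈ g, Cmp.sat c.2.1 (v (.inr (N.owner c.1)) - v (.inl c.1)) c.2.2

/-- Satisfaction of a guard by a global valuation: the value of clock `x` is `v t - v x̃`. -/
def ggsat (v : N.GVal) (g : Guard N.Clock) : Prop :=
  ∀ c ∈ g, Cmp.sat c.2.1 (v (.inr ()) - v (.inl c.1)) c.2.2

/-- Global delay: only the global reference clock advances. -/
def gdelay (v : N.GVal) (δ : ℝ) : N.GVal :=
  fun y => match y with
    | .inl x => v (.inl x)
    | .inr _ => v (.inr ()) + δ

/-- `v'` is obtained from `v` by a (finite) sequence of local delays; equivalently,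
each reference clock advances by some nonnegative amount, offsets are unchanged. -/
def ldelayed (v v' : N.LVal) : Prop :=
  ∃ δ : Fin N.k → ℝ, (∀ p, 0 ≤ δ p) ∧
    v' = fun y => match y with
      | .inl x => v (.inl x)
      | .inr p => v (.inr p) + δ p

/-- Reset of the clocks in `R` in a global valuation. -/
noncomputable def greset (R : Set N.Clock) (v : N.GVal) : N.GVal :=
  fun y => match y with
    | .inl x => if x ∈ R then v (.inr ()) else v (.inl x)
    | .inr u => v (.inr u)

/-- Reset of the clocks in `R` in a local valuation: `x̃` is set to the local
time of the process owning `x`. -/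
noncomputable def lreset (R : Set N.Clock) (v : N.LVal) : N.LVal :=
  fun y => match y with
    | .inl x => if x ∈ R then v (.inr (N.owner x)) else v (.inl x)
    | .inr p => v (.inr p)

/-- Global action step on action `b`. -/
def gact (b : N.Act) (c c' : N.State × N.GVal) : Prop :=
  ∃ tr : ∀ p, p ∈ N.dom b → N.Loc p × Guard N.Clock × Set N.Clock × N.Loc p,
    (∀ p (h : p ∈ N.dom b),
      tr p h ∈ N.Trans b p ∧ (tr p h).1 = c.1 p ∧ (tr p h).2.2.2 = c'.1 p) ∧
    (∀ p, p ∉ N.dom b → c'.1 p = c.1 p) ∧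
    (∀ p (h : p ∈ N.dom b), N.ggsat c.2 (tr p h).2.1) ∧
    c'.2 = N.greset {x | ∃ p h, x ∈ (tr p h).2.2.1} c.2

/-- Local action step on action `b`: additionally the reference clocks of the
processes in `dom b` must agree. -/
def lact (b : N.Act) (c c' : N.State × N.LVal) : Prop :=
  ∃ tr : ∀ p, p ∈ N.dom b → N.Loc p × Guard N.Clock × Set N.Clock × N.Loc p,
    (∀ p (h : p ∈ N.dom b),
      tr p h ∈ N.Trans b p ∧ (tr p h).1 = c.1 p ∧ (tr p h).2.2.2 = c'.1 p) ∧
    (∀ p, p ∉ N.dom b → c'.1 p = c.1 p) ∧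
    (∀ p ∈ N.dom b, ∀ p' ∈ N.dom b, c.2 (.inr p) = c.2 (.inr p')) ∧
    (∀ p (h : p ∈ N.dom b), N.lgsat c.2 (tr p h).2.1) ∧
    c'.2 = N.lreset {x | ∃ p h, x ∈ (tr p h).2.2.1} c.2

/-- Global run on a word of actions: delays and action steps alternate,
starting and ending with a (possibly zero) delay. -/
inductive GRun : List N.Act → (N.State × N.GVal) → (N.State × N.GVal) → Prop
  | nil {q v} (δ : ℝ) (hδ : 0 ≤ δ) : GRun [] (q, v) (q, N.gdelay v δ)
  | cons {b u q v c1 c2} (δ : ℝ) (hδ : 0 ≤ δ)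
      (hb : N.gact b (q, N.gdelay v δ) c1) (h : GRun u c1 c2) :
      GRun (b :: u) (q, v) c2

/-- Local run on a word of actions: sequences of local delays and local action
steps alternate. -/
inductive LRun : List N.Act → (N.State × N.LVal) → (N.State × N.LVal) → Prop
  | nil {q v v'} (hd : N.ldelayed v v') : LRun [] (q, v) (q, v')
  | cons {b u q v v1 c1 c2} (hd : N.ldelayed v v1)
      (hb : N.lact b (q, v1) c1) (h : LRun u c1 c2) :
      LRun (b :: u) (q, v) c2

/-- Local run recording, for each action, its execution time: the common value
of the reference clocks of `dom b` when the step is taken. -/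
inductive LRunT : List (N.Act × ℝ) → (N.State × N.LVal) → (N.State × N.LVal) → Prop
  | nil {q v v'} (hd : N.ldelayed v v') : LRunT [] (q, v) (q, v')
  | cons {b θ u q v v1 c1 c2} (hd : N.ldelayed v v1)
      (hb : N.lact b (q, v1) c1) (hθ : ∀ p ∈ N.dom b, v1 (.inr p) = θ)
      (h : LRunT u c1 c2) :
      LRunT ((b, θ) :: u) (q, v) c2

/-- Equivalence of action sequences: generated by swapping adjacent actions
with disjoint domains. -/
inductive equiv : List N.Act → List N.Act → Prop
  | swap (u w : List N.Act) (a b : N.Act) (h : Disjoint (N.dom a) (N.dom b)) :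
      equiv (u ++ a :: b :: w) (u ++ b :: a :: w)
  | refl (u : List N.Act) : equiv u u
  | trans {u v w} : equiv u v → equiv v w → equiv u w

/-- A local valuation is synchronized if all reference clocks agree. -/
def Synchronized (v : N.LVal) : Prop :=
  ∀ p p' : Fin N.k, v (.inr p) = v (.inr p')

/-- The global valuation associated to a (synchronized) local valuation. -/
def toGlobal (v : N.LVal) : N.GVal :=
  fun y => match y with
    | .inl x => v (.inl x)
    | .inr _ => v (.inr ⟨0, N.kpos⟩)

/-- The synchronized local valuation associated to a global valuation. -/
def toLocal (v : N.GVal) : N.LVal :=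
  fun y => match y with
    | .inl x => v (.inl x)
    | .inr _ => v (.inr ())

/-- The synchronized valuations of a set of local valuations. -/
def syncSet (S : Set N.LVal) : Set N.LVal := {v ∈ S | N.Synchronized v}

/-- The set of local valuations defined by a list of difference constraints. -/
def lzset (L : List (DiffConstraint N.LVar)) : Set N.LVal :=
  {v | N.IsLVal v ∧ ∀ c ∈ L, csat v c}

/-- The set of global valuations defined by a list of difference constraints. -/
def gzset (L : List (DiffConstraint N.GVar)) : Set N.GVal :=
  {v | N.IsGVal v ∧ ∀ c ∈ L, csat v c}

/-- Local zones: sets of local valuations definable by difference constraints. -/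
def IsLZone (S : Set N.LVal) : Prop := ∃ L, S = N.lzset L

/-- Global zones: sets of global valuations definable by difference constraints. -/
def IsGZone (S : Set N.GVal) : Prop := ∃ L, S = N.gzset L

/-- Local-time elapse of a set of local valuations. -/
def lelapse (S : Set N.LVal) : Set N.LVal := {v' | ∃ v ∈ S, N.ldelayed v v'}

/-- Global time elapse of a set of global valuations. -/
def gelapse (S : Set N.GVal) : Set N.GVal :=
  {v' | ∃ v ∈ S, ∃ δ, 0 ≤ δ ∧ v' = N.gdelay v δ}

/-- Local zone graph step on action `b`:
`Z' = local-elapse([R](Z ∩ Z_g ∩ Z_sync))`, required nonempty. -/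
def lzstep (b : N.Act) (c c' : N.State × Set N.LVal) : Prop :=
  ∃ tr : ∀ p, p ∈ N.dom b → N.Loc p × Guard N.Clock × Set N.Clock × N.Loc p,
    (∀ p (h : p ∈ N.dom b),
      tr p h ∈ N.Trans b p ∧ (tr p h).1 = c.1 p ∧ (tr p h).2.2.2 = c'.1 p) ∧
    (∀ p, p ∉ N.dom b → c'.1 p = c.1 p) ∧
    c'.2 = N.lelapse ((N.lreset {x | ∃ p h, x ∈ (tr p h).2.2.1}) ''
      (c.2 ∩ {v | ∀ p (h : p ∈ N.dom b), N.lgsat v (tr p h).2.1}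
           ∩ {v | ∀ p ∈ N.dom b, ∀ p' ∈ N.dom b, v (.inr p) = v (.inr p')})) ∧
    (c'.2).Nonempty

/-- Sequence of local zone graph steps along a word. -/
inductive LZRun : List N.Act → (N.State × Set N.LVal) → (N.State × Set N.LVal) → Prop
  | nil (c) : LZRun [] c c
  | cons {b u c c1 c2} (hb : N.lzstep b c c1) (h : LZRun u c1 c2) :
      LZRun (b :: u) c c2

/-- The initial (discrete) state of the network. -/
def initState : N.State := N.init

/-- The initial global valuation: everything is `0`. -/
def gvalInit : N.GVal := fun _ => 0

/-- The initial local valuation: everything is `0`. -/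
def lvalInit : N.LVal := fun _ => 0

/-- The initial node's zone in the local zone graph. -/
def lzoneInit : Set N.LVal := N.lelapse {N.lvalInit}

/-- State `q` is reachable in the global-time semantics. -/
def GReach (q : N.State) : Prop :=
  ∃ u v, N.GRun u (N.initState, N.gvalInit) (q, v)

/-- State `q` is reachable in the local-time semantics. -/
def LReach (q : N.State) : Prop :=
  ∃ u v, N.LRun u (N.initState, N.lvalInit) (q, v)

/-- Time-abstract simulation between global valuations. -/
def TASim (sim : N.GVal → N.GVal → Prop) : Prop :=
  ∀ v1 v2, sim v1 v2 → ∀ q b δ1 q' v1', 0 ≤ δ1 →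
    N.gact b (q, N.gdelay v1 δ1) (q', v1') →
    ∃ δ2, 0 ≤ δ2 ∧ ∃ v2', N.gact b (q, N.gdelay v2 δ2) (q', v2') ∧ sim v1' v2'

end Network

/-- A local sync graph over a network `N`, based on an abstraction `abs` over
global zones: a subgraph of the local zone graph with covered/uncovered nodes,
satisfying conditions C0–C4. -/
structure SyncGraph (N : Network) (abs : Set N.GVal → Set N.GVal) where
  nodes : Set (N.State × Set N.LVal)
  covered : N.State × Set N.LVal → Prop
  edges : (N.State × Set N.LVal) → (N.State × Set N.LVal) → Prop
  edges_mem : ∀ s s', edges s s' → s ∈ nodes ∧ s' ∈ nodes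
  edges_lzg : ∀ s s', edges s s' → ∃ b, N.lzstep b s s'
  init_mem : (N.initState, N.lzoneInit) ∈ nodes
  init_unc : ¬ covered (N.initState, N.lzoneInit)
  reach : ∀ s ∈ nodes, Relation.ReflTransGen edges (N.initState, N.lzoneInit) s
  unc_succ : ∀ s ∈ nodes, ¬ covered s → ∀ b s', N.lzstep b s s' → edges s s'
  cov_sub : ∀ s ∈ nodes, covered s → ∃ s' ∈ nodes, ¬ covered s' ∧ s.1 = s'.1 ∧
    N.toGlobal '' N.syncSet s.2 ⊆ abs (N.toGlobal '' N.syncSet s'.2)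
  cov_nosucc : ∀ s s', covered s → ¬ edges s s'

/-- A list of difference constraints is canonical (every constraint is tight):
no constraint is implied by the remaining ones. -/
def canonicalL (N : Network) (L : List (DiffConstraint N.LVar)) : Prop :=
  ∀ c ∈ L, ∃ v, N.IsLVal v ∧ (∀ c' ∈ L, c' ≠ c → csat v c') ∧ ¬ csat v c

/-- Minea's region-like equivalence with maximal constant `cmax`. -/
def regEquiv {V : Type} (cmax : ℤ) (v1 v2 : V → ℝ) : Prop :=
  ∀ a b : V, (⌊v1 a - v1 b⌋ = ⌊v2 a - v2 b⌋) ∨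
    (⌊v1 a - v1 b⌋ > cmax ∧ ⌊v2 a - v2 b⌋ > cmax) ∨
    (⌊v1 a - v1 b⌋ < -cmax ∧ ⌊v2 a - v2 b⌋ < -cmax)


/-! In local-time semantics a step on `b` reads and writes only the components (location,
reference clock, clock offsets) of the processes in `dom b`, and every process lets time elapse
on its own. A local configuration therefore splits into per-process components, and a reordered
run is assembled by patching together, process by process, the configurations of the given
runs. -/

namespace Network

variable {N : Network}

def varOwner (N : Network) : N.LVar → Fin N.k := Sum.elim N.owner id

def AgreeAt (N : Network) (p : Fin N.k) (c d : N.State × N.LVal) : Prop :=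
  c.1 p = d.1 p ∧ ∀ y, N.varOwner y = p → c.2 y = d.2 y

def DelayAt (N : Network) (p : Fin N.k) (c d : N.State × N.LVal) : Prop :=
  c.1 p = d.1 p ∧ c.2 (.inr p) ≤ d.2 (.inr p) ∧
    ∀ x, N.owner x = p → c.2 (.inl x) = d.2 (.inl x)

def patch (N : Network) (P : Finset (Fin N.k)) (c d : N.State × N.LVal) : N.State × N.LVal :=
  (fun p => if p ∈ P then d.1 p else c.1 p, fun y => if N.varOwner y ∈ P then d.2 y else c.2 y)

section AgreeAt

variable {p : Fin N.k} {c d e : N.State × N.LVal}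

theorem AgreeAt.symm (h : N.AgreeAt p c d) : N.AgreeAt p d c :=
  ⟨h.1.symm, fun y hy => (h.2 y hy).symm⟩

theorem AgreeAt.trans (h : N.AgreeAt p c d) (h' : N.AgreeAt p d e) : N.AgreeAt p c e :=
  ⟨h.1.trans h'.1, fun y hy => (h.2 y hy).trans (h'.2 y hy)⟩

theorem AgreeAt.delayAt (h : N.AgreeAt p c d) : N.DelayAt p c d :=
  ⟨h.1, (h.2 (.inr p) rfl).le, fun x hx => h.2 (.inl x) hx⟩

theorem DelayAt.trans (h : N.DelayAt p c d) (h' : N.DelayAt p d e) : N.DelayAt p c e :=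
  ⟨h.1.trans h'.1, h.2.1.trans h'.2.1, fun x hx => (h.2.2 x hx).trans (h'.2.2 x hx)⟩

theorem agreeAt_patch_of_mem {P : Finset (Fin N.k)} (hp : p ∈ P) :
    N.AgreeAt p (N.patch P c d) d :=
  ⟨if_pos hp, fun _ hy => if_pos (hy ▸ hp)⟩

theorem agreeAt_patch_of_notMem {P : Finset (Fin N.k)} (hp : p ∉ P) :
    N.AgreeAt p (N.patch P c d) c :=
  ⟨if_neg hp, fun _ hy => if_neg (hy ▸ hp)⟩

end AgreeAt

theorem lreset_inl (R : Set N.Clock) (v : N.LVal) (x : N.Clock) :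
    N.lreset R v (.inl x) = if x ∈ R then v (.inr (N.owner x)) else v (.inl x) := rfl

theorem forall_delayAt_iff {q q' : N.State} {v v' : N.LVal} :
    (∀ p, N.DelayAt p (q, v) (q', v')) ↔ q = q' ∧ N.ldelayed v v' := by
  constructor
  · intro h
    refine ⟨funext fun p => (h p).1,
      fun p => v' (.inr p) - v (.inr p), fun p => sub_nonneg.2 (h p).2.1, funext fun y => ?_⟩
    cases y with
    | inl x => exact ((h (N.owner x)).2.2 x rfl).symm
    | inr p => exact (add_sub_cancel _ _).symm
  · rintro ⟨rfl, δ, hδ, rfl⟩ p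
    exact ⟨rfl, le_add_of_nonneg_right (hδ p), fun _ _ => rfl⟩

theorem lRun_nil_iff {c d : N.State × N.LVal} : N.LRun [] c d ↔ ∀ p, N.DelayAt p c d := by
  obtain ⟨q, v⟩ := c
  obtain ⟨q', v'⟩ := d
  rw [forall_delayAt_iff]
  constructor
  · rintro ⟨hd⟩
    exact ⟨rfl, hd⟩
  · rintro ⟨rfl, hd⟩
    exact LRun.nil hd

theorem lRun_cons_iff {b : N.Act} {u : List N.Act} {c c' : N.State × N.LVal} :
    N.LRun (b :: u) c c' ↔
      ∃ c₁ c₂, (∀ p, N.DelayAt p c c₁) ∧ N.lact b c₁ c₂ ∧ N.LRun u c₂ c' := by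
  obtain ⟨q, v⟩ := c
  constructor
  · intro h
    cases h with
    | cons hd hb h => exact ⟨_, _, forall_delayAt_iff.2 ⟨rfl, hd⟩, hb, h⟩
  · rintro ⟨⟨q₁, v₁⟩, c₂, hdelay, hb, h⟩
    obtain ⟨rfl, hd⟩ := forall_delayAt_iff.1 hdelay
    exact LRun.cons hd hb h

theorem owner_mem_dom_of_mem_resets {b : N.Act}
    {tr : ∀ p, p ∈ N.dom b → N.Loc p × Guard N.Clock × Set N.Clock × N.Loc p}
    (htr : ∀ p h, tr p h ∈ N.Trans b p) {x : N.Clock}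
    (hx : x ∈ {x | ∃ p h, x ∈ (tr p h).2.2.1}) : N.owner x ∈ N.dom b := by
  obtain ⟨p, hp, hx⟩ := hx
  rwa [(N.trans_wf b p _ (htr p hp)).2 x hx]

theorem lact_agreeAt_of_notMem {b : N.Act} {c c' : N.State × N.LVal} {p : Fin N.k}
    (h : N.lact b c c') (hp : p ∉ N.dom b) : N.AgreeAt p c c' := by
  obtain ⟨tr, htr, hq, -, -, hv⟩ := h
  refine ⟨(hq p hp).symm, fun y hy => ?_⟩
  rw [hv]
  cases y with
  | inl x =>
    have hx : x ∉ {x | ∃ p h, x ∈ (tr p h).2.2.1} := fun hx =>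
      hp (hy ▸ owner_mem_dom_of_mem_resets (fun p h => (htr p h).1) hx)
    rw [lreset_inl, if_neg hx]
  | inr p => rfl

-- A local action step reads and writes only the components of the processes in its domain.
theorem lact_of_agreeAt {b : N.Act} {c c' d d' : N.State × N.LVal} (h : N.lact b c c')
    (hd : ∀ p ∈ N.dom b, N.AgreeAt p c d) (hd' : ∀ p ∈ N.dom b, N.AgreeAt p c' d')
    (hdd' : ∀ p ∉ N.dom b, N.AgreeAt p d d') : N.lact b d d' := by
  obtain ⟨tr, htr, hq, hsync, hg, hv⟩ := h
  refine ⟨tr, fun p hp => ?_, fun p hp => (hdd' p hp).1.symm, fun p hp p' hp' => ?_,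
    fun p hp g hg' => ?_, ?_⟩
  · obtain ⟨hmem, hsrc, htgt⟩ := htr p hp
    exact ⟨hmem, hsrc.trans (hd p hp).1, htgt.trans (hd' p hp).1⟩
  · rw [← (hd p hp).2 (.inr p) rfl, ← (hd p' hp').2 (.inr p') rfl]
    exact hsync p hp p' hp'
  · have ho : N.owner g.1 = p := (N.trans_wf b p _ (htr p hp).1).1 g hg'
    rw [← (hd p hp).2 (.inr _) ho, ← (hd p hp).2 (.inl _) ho]
    exact hg p hp g hg'
  · funext y
    by_cases hy : N.varOwner y ∈ N.dom b
    · rw [← (hd' _ hy).2 y rfl, hv]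
      cases y with
      | inl x =>
        rw [lreset_inl, lreset_inl, (hd _ hy).2 (.inl x) rfl, (hd _ hy).2 (.inr (N.owner x)) rfl]
      | inr p => exact (hd p hy).2 _ rfl
    · rw [← (hdd' _ hy).2 y rfl]
      cases y with
      | inl x =>
        have hx : x ∉ {x | ∃ p h, x ∈ (tr p h).2.2.1} := fun hx =>
          hy (owner_mem_dom_of_mem_resets (fun p h => (htr p h).1) hx)
        rw [lreset_inl, if_neg hx]
      | inr p => rfl

theorem lact_patch {b : N.Act} {c c' : N.State × N.LVal} (h : N.lact b c c')
    (d : N.State × N.LVal) : N.lact b (N.patch (N.dom b) d c) (N.patch (N.dom b) d c') :=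
  lact_of_agreeAt h (fun _ hp => (agreeAt_patch_of_mem hp).symm)
    (fun _ hp => (agreeAt_patch_of_mem hp).symm)
    (fun _ hp => (agreeAt_patch_of_notMem hp).trans (agreeAt_patch_of_notMem hp).symm)

section Disjoint

variable {a b : N.Act}

/-- Each process of `dom b` performs its delays and its `b`-step first, and then each process
of `dom a` its delays and its `a`-step; the final delays absorb what remains. -/
theorem LRun.swap_of_disjoint (hab : Disjoint (N.dom a) (N.dom b)) {c c' : N.State × N.LVal}
    (h : N.LRun [a, b] c c') : N.LRun [b, a] c c' := by
  simp only [lRun_cons_iff, lRun_nil_iff] at h ⊢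
  obtain ⟨c₁, c₂, h₀₁, hA, c₃, c₄, h₂₃, hB, h₄₅⟩ := h
  have hA' : ∀ p ∉ N.dom a, N.AgreeAt p c₁ c₂ := fun p => lact_agreeAt_of_notMem hA
  have hB' : ∀ p ∉ N.dom b, N.AgreeAt p c₃ c₄ := fun p => lact_agreeAt_of_notMem hB
  have hbA : ∀ p ∈ N.dom b, p ∉ N.dom a := fun _ hp => Finset.disjoint_right.mp hab hp
  have haB : ∀ p ∈ N.dom a, p ∉ N.dom b := fun _ hp => Finset.disjoint_left.mp hab hp
  set d₂ := N.patch (N.dom b) c c₄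
  refine ⟨N.patch (N.dom b) c c₃, d₂, fun p => ?_, lact_patch hB _,
    N.patch (N.dom a) d₂ c₁, N.patch (N.dom a) d₂ c₂, fun p => ?_, lact_patch hA _,
    fun p => ?_⟩
  · by_cases hp : p ∈ N.dom b
    · exact (((h₀₁ p).trans (hA' p (hbA p hp)).delayAt).trans (h₂₃ p)).trans
        (agreeAt_patch_of_mem hp).symm.delayAt
    · exact (agreeAt_patch_of_notMem hp).symm.delayAt
  · by_cases hp : p ∈ N.dom a
    · exact ((agreeAt_patch_of_notMem (haB p hp)).delayAt.trans (h₀₁ p)).trans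
        (agreeAt_patch_of_mem hp).symm.delayAt
    · exact (agreeAt_patch_of_notMem hp).symm.delayAt
  · by_cases hpa : p ∈ N.dom a
    · exact (((agreeAt_patch_of_mem hpa).delayAt.trans (h₂₃ p)).trans
        (hB' p (haB p hpa)).delayAt).trans (h₄₅ p)
    refine ((agreeAt_patch_of_notMem hpa).delayAt.trans ?_).trans (h₄₅ p)
    by_cases hpb : p ∈ N.dom b
    · exact (agreeAt_patch_of_mem hpb).delayAt
    · exact (agreeAt_patch_of_notMem hpb).delayAt.trans <| ((((h₀₁ p).trans
        (hA' p hpa).delayAt).trans (h₂₃ p)).trans (hB' p hpb).delayAt)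

/-- The `a`-step is taken with the delays of `dom a` only, which leaves the processes of `dom b`
in their initial configuration, ready for their delays and their `b`-step. -/
theorem LRun.exists_pair_of_disjoint (hab : Disjoint (N.dom a) (N.dom b))
    {c cₐ c_b : N.State × N.LVal} (ha : N.LRun [a] c cₐ) (hb : N.LRun [b] c c_b) :
    ∃ c', N.LRun [a, b] c c' := by
  simp only [lRun_cons_iff, lRun_nil_iff] at ha hb ⊢
  obtain ⟨c₁, c₂, h₀₁, hA, -⟩ := ha
  obtain ⟨e₁, e₂, h₀e, hB, -⟩ := hb
  have hbA : ∀ p ∈ N.dom b, p ∉ N.dom a := fun _ hp => Finset.disjoint_right.mp hab hp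
  set d₂ := N.patch (N.dom a) c c₂
  refine ⟨N.patch (N.dom b) d₂ e₂, N.patch (N.dom a) c c₁, d₂, fun p => ?_,
    lact_patch hA _, N.patch (N.dom b) d₂ e₁, _, fun p => ?_,
    lact_patch hB _, fun p => ⟨rfl, le_rfl, fun _ _ => rfl⟩⟩
  · by_cases hp : p ∈ N.dom a
    · exact (h₀₁ p).trans (agreeAt_patch_of_mem hp).symm.delayAt
    · exact (agreeAt_patch_of_notMem hp).symm.delayAt
  · by_cases hp : p ∈ N.dom b
    · exact ((agreeAt_patch_of_notMem (hbA p hp)).delayAt.trans (h₀e p)).trans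
        (agreeAt_patch_of_mem hp).symm.delayAt
    · exact (agreeAt_patch_of_notMem hp).symm.delayAt

end Disjoint

end Network

theorem stmt1 (N : Network) (a b : N.Act) (hd : Disjoint (N.dom a) (N.dom b)) :
    (∀ (q : N.State) (v : N.LVal) (q' : N.State) (v' : N.LVal), N.IsLVal v →
      N.LRun [a, b] (q, v) (q', v') → N.LRun [b, a] (q, v) (q', v')) ∧
    (∀ (q : N.State) (v : N.LVal) qa (va : N.LVal) qb (vb : N.LVal), N.IsLVal v →
      N.LRun [a] (q, v) (qa, va) → N.LRun [b] (q, v) (qb, vb) →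
      ∃ qab vab, N.LRun [a, b] (q, v) (qab, vab)) := by
  refine ⟨fun _ _ _ _ _ h => h.swap_of_disjoint hd, fun _ _ _ _ _ _ _ ha hb => ?_⟩
  obtain ⟨c', h⟩ := ha.exists_pair_of_disjoint hd hb
  exact ⟨c'.1, c'.2, h⟩
end

section
/- If (q_0, v_0) =u=> (q_n, v_n) is a local run and u ~ w (equivalent up to permuting adjacent actions with disjoint domains), then (q_0, v_0) =w=> (q_n, v_n) is also a local run, reaching the same state and the same local valuation. -/
open Classical

/-! A local step on `b` reads and writes only the reference clocks of `dom b` and the offsets of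
clocks owned by `dom b`. Hence two steps on actions with disjoint domains commute, and a local
delay of processes outside `dom b` commutes with a `b`-step; so the delay between two swapped
steps can be split by process and pushed out before and after the pair. -/

namespace Network

variable {N : Network}

def ldelay (v : N.LVal) (δ : Fin N.k → ℝ) : N.LVal := fun y => match y with
  | .inl x => v (.inl x)
  | .inr p => v (.inr p) + δ p

@[simp] lemma ldelay_inl (v : N.LVal) (δ : Fin N.k → ℝ) (x : N.Clock) :
    N.ldelay v δ (.inl x) = v (.inl x) := rfl

@[simp] lemma ldelay_inr (v : N.LVal) (δ : Fin N.k → ℝ) (p : Fin N.k) :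
    N.ldelay v δ (.inr p) = v (.inr p) + δ p := rfl

@[simp] lemma ldelay_zero (v : N.LVal) : N.ldelay v 0 = v := by
  funext y; cases y <;> simp

lemma ldelay_ldelay (v : N.LVal) (δ₁ δ₂ : Fin N.k → ℝ) :
    N.ldelay (N.ldelay v δ₁) δ₂ = N.ldelay v (δ₁ + δ₂) := by
  funext y; cases y <;> simp [add_assoc]

lemma ldelay_ldelay_neg (v : N.LVal) (δ : Fin N.k → ℝ) :
    N.ldelay (N.ldelay v δ) (-δ) = v := by
  funext y; cases y <;> simp

lemma ldelayed_ldelay (v : N.LVal) {δ : Fin N.k → ℝ} (hδ : ∀ p, 0 ≤ δ p) :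
    N.ldelayed v (N.ldelay v δ) := ⟨δ, hδ, rfl⟩

lemma ldelayed_refl (v : N.LVal) : N.ldelayed v v := by
  simpa using N.ldelayed_ldelay v (δ := 0) fun _ => le_rfl

lemma ldelayed_trans {u v w : N.LVal} (h₁ : N.ldelayed u v) (h₂ : N.ldelayed v w) :
    N.ldelayed u w := by
  obtain ⟨δ₁, hδ₁, rfl⟩ := h₁
  obtain ⟨δ₂, hδ₂, rfl⟩ := h₂
  change N.ldelayed u (N.ldelay (N.ldelay u δ₁) δ₂)
  exact ldelay_ldelay u δ₁ δ₂ ▸ N.ldelayed_ldelay u fun p => add_nonneg (hδ₁ p) (hδ₂ p)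

@[simp] lemma lreset_inr (R : Set N.Clock) (v : N.LVal) (p : Fin N.k) :
    N.lreset R v (.inr p) = v (.inr p) := rfl

lemma lreset_inl_of_notMem {R : Set N.Clock} (v : N.LVal) {x : N.Clock} (hx : x ∉ R) :
    N.lreset R v (.inl x) = v (.inl x) := if_neg hx

lemma lreset_comm (R R' : Set N.Clock) (v : N.LVal) :
    N.lreset R (N.lreset R' v) = N.lreset R' (N.lreset R v) := by
  funext y
  rcases y with x | p
  · simp only [lreset]; split_ifs <;> rfl
  · rfl

lemma lreset_ldelay {R : Set N.Clock} (v : N.LVal) {δ : Fin N.k → ℝ}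
    (hδ : ∀ x ∈ R, δ (N.owner x) = 0) :
    N.lreset R (N.ldelay v δ) = N.ldelay (N.lreset R v) δ := by
  funext y
  rcases y with x | p
  · by_cases hx : x ∈ R <;> simp [lreset, hx, hδ]
  · rfl

lemma lgsat_congr {v v' : N.LVal} {g : Guard N.Clock}
    (h : ∀ c ∈ g, v (.inr (N.owner c.1)) - v (.inl c.1) =
      v' (.inr (N.owner c.1)) - v' (.inl c.1)) :
    N.lgsat v g ↔ N.lgsat v' g :=
  forall₂_congr fun c hc => by rw [h c hc]

lemma lgsat_lreset {R : Set N.Clock} {v : N.LVal} {g : Guard N.Clock}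
    (hg : ∀ c ∈ g, c.1 ∉ R) : N.lgsat (N.lreset R v) g ↔ N.lgsat v g :=
  lgsat_congr fun c hc => by rw [lreset_inr, lreset_inl_of_notMem v (hg c hc)]

lemma lgsat_ldelay {v : N.LVal} {δ : Fin N.k → ℝ} {g : Guard N.Clock}
    (hg : ∀ c ∈ g, δ (N.owner c.1) = 0) : N.lgsat (N.ldelay v δ) g ↔ N.lgsat v g :=
  lgsat_congr fun c hc => by simp [hg c hc]

lemma owner_mem_dom_of_transitions {b : N.Act}
    {tr : ∀ p, p ∈ N.dom b → N.Loc p × Guard N.Clock × Set N.Clock × N.Loc p}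
    (htr : ∀ p (h : p ∈ N.dom b), tr p h ∈ N.Trans b p) :
    (∀ p h, ∀ c ∈ (tr p h).2.1, N.owner c.1 ∈ N.dom b) ∧
      ∀ x ∈ {x | ∃ p h, x ∈ (tr p h).2.2.1}, N.owner x ∈ N.dom b := by
  refine ⟨fun p h c hc => ?_, fun x ⟨p, h, hx⟩ => ?_⟩
  · rw [(N.trans_wf b p _ (htr p h)).1 c hc]; exact h
  · rw [(N.trans_wf b p _ (htr p h)).2 x hx]; exact h

lemma lact_ldelay {b : N.Act} {q q' : N.State} {v v' : N.LVal} {δ : Fin N.k → ℝ}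
    (hδ : ∀ p ∈ N.dom b, δ p = 0) (h : N.lact b (q, v) (q', v')) :
    N.lact b (q, N.ldelay v δ) (q', N.ldelay v' δ) := by
  obtain ⟨tr, htr, hidle, hsync, hguard, rfl⟩ := h
  obtain ⟨hguardOwn, hresetOwn⟩ := owner_mem_dom_of_transitions fun p h => (htr p h).1
  refine ⟨tr, htr, hidle, fun p hp p' hp' => ?_, fun p h => ?_, ?_⟩
  · simpa [hδ p hp, hδ p' hp'] using hsync p hp p' hp'
  · exact (lgsat_ldelay fun c hc => hδ _ (hguardOwn p h c hc)).2 (hguard p h)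
  · exact (lreset_ldelay v fun x hx => hδ _ (hresetOwn x hx)).symm

lemma lact_comm {a b : N.Act} (hab : Disjoint (N.dom a) (N.dom b)) {q₀ q₁ q₂ : N.State}
    {v₀ v₁ v₂ : N.LVal} (ha : N.lact a (q₀, v₀) (q₁, v₁)) (hb : N.lact b (q₁, v₁) (q₂, v₂)) :
    ∃ c, N.lact b (q₀, v₀) c ∧ N.lact a c (q₂, v₂) := by
  obtain ⟨trA, htrA, hidleA, hsyncA, hguardA, rfl⟩ := ha
  obtain ⟨trB, htrB, hidleB, hsyncB, hguardB, rfl⟩ := hb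
  obtain ⟨hguardOwnA, hresetOwnA⟩ := owner_mem_dom_of_transitions fun p h => (htrA p h).1
  obtain ⟨hguardOwnB, hresetOwnB⟩ := owner_mem_dom_of_transitions fun p h => (htrB p h).1
  have hA : ∀ p ∈ N.dom a, p ∉ N.dom b := fun _ hp => Finset.disjoint_left.mp hab hp
  have hB : ∀ p ∈ N.dom b, p ∉ N.dom a := fun _ hp => Finset.disjoint_right.mp hab hp
  refine ⟨(fun p => if p ∈ N.dom a then q₀ p else q₂ p, N.lreset _ v₀),
    ⟨trB, fun p h => ?_, fun p hp => ?_, fun p hp p' hp' => ?_, fun p h => ?_, rfl⟩,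
    ⟨trA, fun p h => ?_, fun p hp => ?_, fun p hp p' hp' => ?_, fun p h => ?_,
      lreset_comm _ _ _⟩⟩
  · obtain ⟨htr, hsrc, htgt⟩ := htrB p h
    exact ⟨htr, hsrc.trans (hidleA p (hB p h)), by simpa [hB p h] using htgt⟩
  · by_cases hpa : p ∈ N.dom a
    · simp [hpa]
    · simpa [hpa] using (hidleB p hp).trans (hidleA p hpa)
  · simpa using hsyncB p hp p' hp'
  · exact (lgsat_lreset fun c hc hcA =>
      hB _ (hguardOwnB p h c hc) (hresetOwnA _ hcA)).1 (hguardB p h)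
  · obtain ⟨htr, hsrc, htgt⟩ := htrA p h
    exact ⟨htr, by simpa [h] using hsrc, htgt.trans (hidleB p (hA p h)).symm⟩
  · simp [hp]
  · simpa using hsyncA p hp p' hp'
  · exact (lgsat_lreset fun c hc hcB =>
      hA _ (hguardOwnA p h c hc) (hresetOwnB _ hcB)).2 (hguardA p h)

lemma lact_ldelayed_lact_comm {a b : N.Act} (hab : Disjoint (N.dom a) (N.dom b))
    {q₀ q₁ q₂ : N.State} {v₀ v₁ v₁' v₂ : N.LVal} (ha : N.lact a (q₀, v₀) (q₁, v₁))
    (hd : N.ldelayed v₁ v₁') (hb : N.lact b (q₁, v₁') (q₂, v₂)) :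
    ∃ v₀' c v₂', N.ldelayed v₀ v₀' ∧ N.lact b (q₀, v₀') c ∧ N.lact a c (q₂, v₂') ∧
      N.ldelayed v₂' v₂ := by
  obtain ⟨δ, hδ, rfl⟩ := hd
  change N.lact b (q₁, N.ldelay v₁ δ) (q₂, v₂) at hb
  -- Split the delay into the part outside `dom a`, moved before the `a`-step, and the part
  -- inside `dom a` (hence outside `dom b`), moved after the `b`-step.
  set δout : Fin N.k → ℝ := fun p => if p ∈ N.dom a then 0 else δ p
  set δin : Fin N.k → ℝ := fun p => if p ∈ N.dom a then δ p else 0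
  have hsplit : δ = δout + δin := by
    funext p; by_cases hp : p ∈ N.dom a <;> simp [δout, δin, hp]
  have ha' : N.lact a (q₀, N.ldelay v₀ δout) (q₁, N.ldelay v₁ δout) :=
    lact_ldelay (fun p hp => if_pos hp) ha
  have hb' : N.lact b (q₁, N.ldelay v₁ δout) (q₂, N.ldelay v₂ (-δin)) := by
    have hδin : ∀ p ∈ N.dom b, (-δin) p = 0 := fun p hp => by
      simp [δin, Finset.disjoint_right.mp hab hp]
    simpa only [hsplit, ← ldelay_ldelay, ldelay_ldelay_neg] using lact_ldelay hδin hb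
  obtain ⟨c, hbc, hca⟩ := lact_comm hab ha' hb'
  refine ⟨_, c, _, ldelayed_ldelay v₀ fun p => ?_, hbc, hca, ?_⟩
  · by_cases hp : p ∈ N.dom a <;> simp [δout, hp, hδ p]
  · simpa [ldelay_ldelay] using
      N.ldelayed_ldelay (N.ldelay v₂ (-δin)) (δ := δin) fun p => by
        by_cases hp : p ∈ N.dom a <;> simp [δin, hp, hδ p]

lemma LRun.of_ldelayed_left {w : List N.Act} {q : N.State} {u v : N.LVal}
    {c : N.State × N.LVal} (hd : N.ldelayed u v) (h : N.LRun w (q, v) c) :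
    N.LRun w (q, u) c := by
  cases h with
  | nil hd' => exact .nil (ldelayed_trans hd hd')
  | cons hd' hb h => exact .cons (ldelayed_trans hd hd') hb h

lemma LRun.swap_cons_cons {a b : N.Act} (hab : Disjoint (N.dom a) (N.dom b))
    {w : List N.Act} {q : N.State} {v : N.LVal} {c : N.State × N.LVal}
    (h : N.LRun (a :: b :: w) (q, v) c) : N.LRun (b :: a :: w) (q, v) c := by
  rcases h with _ | ⟨hd₁, ha, _ | ⟨hd₂, hb, h⟩⟩
  obtain ⟨v₀', ⟨q', v'⟩, v₂', hd, hb', ha', hd'⟩ := lact_ldelayed_lact_comm hab ha hd₂ hb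
  exact .cons (ldelayed_trans hd₁ hd) hb' (.cons (ldelayed_refl v') ha' (h.of_ldelayed_left hd'))

lemma LRun.swap {a b : N.Act} (hab : Disjoint (N.dom a) (N.dom b)) (u w : List N.Act)
    {c c' : N.State × N.LVal} (h : N.LRun (u ++ a :: b :: w) c c') :
    N.LRun (u ++ b :: a :: w) c c' := by
  induction u generalizing c with
  | nil => obtain ⟨q, v⟩ := c; exact h.swap_cons_cons hab
  | cons x u ih =>
    rcases h with _ | ⟨hd, hx, h⟩
    exact .cons hd hx (ih h)

lemma LRun.of_equiv {u w : List N.Act} (huw : N.equiv u w) {c c' : N.State × N.LVal}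
    (h : N.LRun u c c') : N.LRun w c c' := by
  induction huw generalizing c with
  | swap u w a b hab => exact h.swap hab u w
  | refl u => exact h
  | trans _ _ ih₁ ih₂ => exact ih₂ (ih₁ h)

end Network

theorem stmt2_general (N : Network) (u w : List N.Act) (h : N.equiv u w)
    (q : N.State) (v : N.LVal) (q' : N.State) (v' : N.LVal)
    (hr : N.LRun u (q, v) (q', v')) : N.LRun w (q, v) (q', v') :=
  hr.of_equiv h

theorem stmt2 (N : Network) (u w : List N.Act) (h : N.equiv u w)
    (q : N.State) (v : N.LVal) (hv : N.IsLVal v) (q' : N.State) (v' : N.LVal)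
    (hr : N.LRun u (q, v) (q', v')) : N.LRun w (q, v) (q', v') :=
  stmt2_general N u w h q v q' v' hr
end

section
/- Every local run can be reordered into a 'soon' run: if (q_0,v_0) =u=> (q_n,v_n) is a local run, then there exists w ~ u such that (q_0,v_0) =w=> (q_n,v_n) is a local run in which the execution times of successive actions are nondecreasing. -/
open Classical

/-! Insertion sort by execution time. When an action with execution time `θa` is immediately
followed by an action with an earlier time `θb < θa`, their domains are disjoint: a shared process
would have its reference clock at `θa` after the first action and at `θb` for the second, but
reference clocks never decrease along a run. An action step only reads and writes the locations
and clocks of its own domain, so the two steps can be performed in the other order, each process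
simply delaying to the time at which it originally took its step. -/

/-- Along a delay, an offset variable `x̃` is unchanged and a reference clock `t_p` can only grow. -/
def delayedAt {X P : Type} : X ⊕ P → ℝ → ℝ → Prop
  | .inl _, a, b => a = b
  | .inr _, a, b => a ≤ b

lemma delayedAt_refl {X P : Type} (y : X ⊕ P) (a : ℝ) : delayedAt y a a := by
  cases y <;> simp [delayedAt]

lemma delayedAt.trans {X P : Type} {y : X ⊕ P} {a b c : ℝ} (hab : delayedAt y a b)
    (hbc : delayedAt y b c) : delayedAt y a c := by
  cases y
  · exact Eq.trans hab hbc
  · exact le_trans hab hbc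

lemma Finset.piecewise_eq_right {ι : Type*} {π : ι → Sort*} {s : Finset ι}
    [∀ i, Decidable (i ∈ s)] {f g : ∀ i, π i} (h : ∀ i ∈ s, f i = g i) : s.piecewise f g = g := by
  funext i
  by_cases hi : i ∈ s
  · rw [Finset.piecewise_eq_of_mem _ _ _ hi, h i hi]
  · rw [Finset.piecewise_eq_of_notMem _ _ _ hi]

lemma Finset.piecewise_piecewise_eq_of_disjoint {ι : Type*} {π : ι → Sort*} {s t : Finset ι}
    [∀ i, Decidable (i ∈ s)] [∀ i, Decidable (i ∈ t)] (hst : Disjoint s t) {f g h : ∀ i, π i}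
    (hf : ∀ i ∉ s, f i = h i) (hg : ∀ i ∉ t, g i = f i) : s.piecewise f (t.piecewise g h) = g := by
  funext i
  by_cases his : i ∈ s
  · rw [Finset.piecewise_eq_of_mem _ _ _ his, hg i (Finset.disjoint_left.mp hst his)]
  by_cases hit : i ∈ t
  · rw [Finset.piecewise_eq_of_notMem _ _ _ his, Finset.piecewise_eq_of_mem _ _ _ hit]
  · rw [Finset.piecewise_eq_of_notMem _ _ _ his, Finset.piecewise_eq_of_notMem _ _ _ hit,
      hg i hit, hf i his]

namespace Network

variable {N : Network}

variable (N) in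
/-- The variables of the processes in `P`: their reference clocks and the offsets of the clocks
they own. -/
def vars (P : Finset (Fin N.k)) : Set N.LVar := {y | Sum.elim N.owner id y ∈ P}

lemma ldelayed_iff {v v' : N.LVal} : N.ldelayed v v' ↔ ∀ y, delayedAt y (v y) (v' y) := by
  constructor
  · rintro ⟨δ, hδ, rfl⟩ (x | p)
    · exact rfl
    · exact le_add_of_nonneg_right (hδ p)
  · intro h
    refine ⟨fun p => v' (.inr p) - v (.inr p), fun p => sub_nonneg.mpr (h (.inr p)), ?_⟩
    funext y
    cases y with
    | inl x => exact (h (.inl x)).symm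
    | inr p => simp

lemma ldelayed_trans_s3 {v v' v'' : N.LVal} (h : N.ldelayed v v') (h' : N.ldelayed v' v'') :
    N.ldelayed v v'' := by
  rw [ldelayed_iff] at *
  exact fun y => (h y).trans (h' y)

lemma ldelayed_piecewise_self {s : Set N.LVar} {u v : N.LVal}
    (h : ∀ y ∈ s, delayedAt y (u y) (v y)) : N.ldelayed u (s.piecewise v u) := by
  rw [ldelayed_iff]
  intro y
  by_cases hy : y ∈ s
  · simpa [hy] using h y hy
  · simpa [hy] using delayedAt_refl y (u y)

lemma ldelayed_piecewise_piecewise {s t : Set N.LVar} (hst : Disjoint s t) {f g h : N.LVal}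
    (hf : ∀ y ∉ s, delayedAt y (h y) (f y)) (hg : ∀ y ∉ t, delayedAt y (f y) (g y)) :
    N.ldelayed (s.piecewise f (t.piecewise g h)) g := by
  refine ldelayed_iff.mpr fun y => ?_
  by_cases hys : y ∈ s
  · rw [Set.piecewise_eq_of_mem _ _ _ hys]
    exact hg y (Set.disjoint_left.mp hst hys)
  by_cases hyt : y ∈ t
  · rw [Set.piecewise_eq_of_notMem _ _ _ hys, Set.piecewise_eq_of_mem _ _ _ hyt]
    exact delayedAt_refl y _
  · rw [Set.piecewise_eq_of_notMem _ _ _ hys, Set.piecewise_eq_of_notMem _ _ _ hyt]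
    exact (hf y hys).trans (hg y hyt)

lemma LRunT.of_ldelayed {tw : List (N.Act × ℝ)} {q : N.State} {v v' : N.LVal}
    {c : N.State × N.LVal} (hd : N.ldelayed v v') (h : N.LRunT tw (q, v') c) :
    N.LRunT tw (q, v) c := by
  cases h with
  | nil hd' => exact .nil (ldelayed_trans_s3 hd hd')
  | cons hd' hb hθ h => exact .cons (ldelayed_trans_s3 hd hd') hb hθ h

lemma equiv_cons (a : N.Act) {u w : List N.Act} (h : N.equiv u w) :
    N.equiv (a :: u) (a :: w) := by
  induction h with
  | swap u w x y h => exact .swap (a :: u) w x y h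
  | refl u => exact .refl _
  | trans _ _ ih₁ ih₂ => exact .trans ih₁ ih₂

lemma lgsat_piecewise {P : Finset (Fin N.k)} {g : Guard N.Clock} (hg : ∀ c ∈ g, N.owner c.1 ∈ P)
    (v u : N.LVal) : N.lgsat ((N.vars P).piecewise v u) g ↔ N.lgsat v g := by
  refine forall₂_congr fun c hc => ?_
  have hx : (.inl c.1 : N.LVar) ∈ N.vars P := hg c hc
  have ht : (.inr (N.owner c.1) : N.LVar) ∈ N.vars P := hg c hc
  rw [Set.piecewise_eq_of_mem _ _ _ hx, Set.piecewise_eq_of_mem _ _ _ ht]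

lemma lreset_piecewise {P : Finset (Fin N.k)} {R : Set N.Clock} (hR : ∀ x ∈ R, N.owner x ∈ P)
    (v u : N.LVal) :
    N.lreset R ((N.vars P).piecewise v u) = (N.vars P).piecewise (N.lreset R v) u := by
  funext y
  rcases y with x | p
  · by_cases hx : N.owner x ∈ P
    · have hx' : (.inl x : N.LVar) ∈ N.vars P := hx
      have ht : (.inr (N.owner x) : N.LVar) ∈ N.vars P := hx
      simp [lreset, Set.piecewise_eq_of_mem _ _ _ hx', Set.piecewise_eq_of_mem _ _ _ ht]
    · have hx' : (.inl x : N.LVar) ∉ N.vars P := hx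
      have hxR : x ∉ R := fun h => hx (hR x h)
      simp [lreset, Set.piecewise_eq_of_notMem _ _ _ hx', hxR]
  · by_cases hp : (.inr p : N.LVar) ∈ N.vars P <;> simp [lreset, hp]

section lact

variable {b : N.Act} {q q' : N.State} {v w : N.LVal}

lemma lact.inr_eq (h : N.lact b (q, v) (q', w)) (p : Fin N.k) : w (.inr p) = v (.inr p) := by
  obtain ⟨_, _, _, _, _, rfl⟩ := h
  rfl

lemma lact.state_eq_of_notMem (h : N.lact b (q, v) (q', w)) {p : Fin N.k} (hp : p ∉ N.dom b) :
    q' p = q p :=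
  h.choose_spec.2.1 p hp

lemma lact.eq_of_notMem (h : N.lact b (q, v) (q', w)) {y : N.LVar} (hy : y ∉ N.vars (N.dom b)) :
    w y = v y := by
  obtain ⟨tr, htr, -, -, -, rfl⟩ := h
  rcases y with x | p
  · have hxR : x ∉ {x | ∃ p h, x ∈ (tr p h).2.2.1} := by
      rintro ⟨p, hp, hx⟩
      exact hy (show N.owner x ∈ N.dom b from ((N.trans_wf b p _ (htr p hp).1).2 x hx).symm ▸ hp)
    simp [lreset, hxR]
  · rfl

lemma lact.piecewise (h : N.lact b (q, v) (q', w)) (r : N.State) (u : N.LVal) :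
    N.lact b ((N.dom b).piecewise q r, (N.vars (N.dom b)).piecewise v u)
      ((N.dom b).piecewise q' r, (N.vars (N.dom b)).piecewise w u) := by
  obtain ⟨tr, htr, -, hsync, hg, rfl⟩ := h
  have hown : ∀ p (hp : p ∈ N.dom b), (∀ c ∈ (tr p hp).2.1, N.owner c.1 ∈ N.dom b) ∧
      ∀ x ∈ (tr p hp).2.2.1, N.owner x ∈ N.dom b := fun p hp =>
    ⟨fun c hc => ((N.trans_wf b p _ (htr p hp).1).1 c hc).symm ▸ hp,
      fun x hx => ((N.trans_wf b p _ (htr p hp).1).2 x hx).symm ▸ hp⟩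
  refine ⟨tr, fun p hp => ?_, fun p hp => ?_, fun p hp p' hp' => ?_, fun p hp => ?_, ?_⟩
  · simpa [Finset.piecewise_eq_of_mem _ _ _ hp] using htr p hp
  · simp [Finset.piecewise_eq_of_notMem _ _ _ hp]
  · have hpv : (.inr p : N.LVar) ∈ N.vars (N.dom b) := hp
    have hpv' : (.inr p' : N.LVar) ∈ N.vars (N.dom b) := hp'
    simpa [Set.piecewise_eq_of_mem _ _ _ hpv, Set.piecewise_eq_of_mem _ _ _ hpv'] using
      hsync p hp p' hp'
  · exact (lgsat_piecewise (hown p hp).1 _ _).mpr (hg p hp)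
  · refine (lreset_piecewise ?_ _ _).symm
    rintro x ⟨p, hp, hx⟩
    exact (hown p hp).2 x hx

end lact

lemma LRunT.disjoint_dom_of_lt {a b : N.Act} {θa θb : ℝ} {rest : List (N.Act × ℝ)}
    {c c' : N.State × N.LVal} (hlt : θb < θa)
    (h : N.LRunT ((a, θa) :: (b, θb) :: rest) c c') : Disjoint (N.dom a) (N.dom b) := by
  cases h with
  | @cons _ _ _ _ _ v₁ c₁ _ _ ha hθa h =>
  obtain ⟨q₁, w₁⟩ := c₁
  cases h with
  | @cons _ _ _ _ _ v₂ _ _ hd hb hθb h =>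
  refine Finset.disjoint_left.mpr fun p hpa hpb => hlt.not_ge ?_
  calc θa = w₁ (.inr p) := by rw [ha.inr_eq, hθa p hpa]
    _ ≤ v₂ (.inr p) := ldelayed_iff.mp hd (.inr p)
    _ = θb := hθb p hpb

/-- Each process of `dom b` delays straight to the time of its `b`-step and takes it first;
then each process of `dom a` delays to the time of its `a`-step. -/
lemma LRunT.swap {a b : N.Act} {θa θb : ℝ} {rest : List (N.Act × ℝ)} {q : N.State}
    {v : N.LVal} {c : N.State × N.LVal} (hdisj : Disjoint (N.dom a) (N.dom b))
    (h : N.LRunT ((a, θa) :: (b, θb) :: rest) (q, v) c) :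
    N.LRunT ((b, θb) :: (a, θa) :: rest) (q, v) c := by
  cases h with
  | @cons _ _ _ _ _ v₁ c₁ _ hd₁ ha hθa h =>
  obtain ⟨q₁, w₁⟩ := c₁
  cases h with
  | @cons _ _ _ _ _ v₂ c₂ _ hd₂ hb hθb h =>
  obtain ⟨q₂, w₂⟩ := c₂
  set A := N.dom a
  set B := N.dom b
  have hAB : ∀ p ∈ A, p ∉ B := fun _ hp => Finset.disjoint_left.mp hdisj hp
  have hBA : ∀ p ∈ B, p ∉ A := fun _ hp => Finset.disjoint_right.mp hdisj hp
  have hd₁ := ldelayed_iff.mp hd₁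
  have hd₂ := ldelayed_iff.mp hd₂
  have hv : ∀ y ∉ N.vars A, delayedAt y (v y) (w₁ y) := fun y hy => by
    rw [ha.eq_of_notMem hy]
    exact hd₁ y
  have hw : ∀ y ∉ N.vars B, delayedAt y (w₁ y) (w₂ y) := fun y hy => by
    rw [hb.eq_of_notMem hy]
    exact hd₂ y
  have hq : B.piecewise q₁ q = q :=
    Finset.piecewise_eq_right fun p hp => ha.state_eq_of_notMem (hBA p hp)
  have hq' : A.piecewise q (B.piecewise q₂ q) = B.piecewise q₂ q :=
    Finset.piecewise_eq_right fun p hp => by simp [hAB p hp]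
  have hq₂ : A.piecewise q₁ (B.piecewise q₂ q) = q₂ :=
    Finset.piecewise_piecewise_eq_of_disjoint hdisj (fun _ => ha.state_eq_of_notMem)
      (fun _ => hb.state_eq_of_notMem)
  have hb' := hb.piecewise q v
  have ha' := ha.piecewise (B.piecewise q₂ q) ((N.vars B).piecewise w₂ v)
  rw [hq] at hb'
  rw [hq', hq₂] at ha'
  refine .cons ?_ hb' ?_ (.cons ?_ ha' ?_ (LRunT.of_ldelayed ?_ h))
  · exact ldelayed_piecewise_self fun y hy => (hv y (hBA _ hy)).trans (hd₂ y)
  · exact fun p hp => (Set.piecewise_eq_of_mem (N.vars B) _ _ (i := .inr p) hp).trans (hθb p hp)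
  · refine ldelayed_piecewise_self fun y hy => ?_
    rw [Set.piecewise_eq_of_notMem (N.vars B) _ _ (hAB _ hy)]
    exact hd₁ y
  · exact fun p hp => (Set.piecewise_eq_of_mem (N.vars A) _ _ (i := .inr p) hp).trans (hθa p hp)
  · exact ldelayed_piecewise_piecewise (Set.disjoint_left.mpr fun _ hy => hAB _ hy) hv hw

lemma LRunT.orderedInsert {x : N.Act × ℝ} :
    ∀ {tw : List (N.Act × ℝ)} {c c' : N.State × N.LVal}, N.LRunT (x :: tw) c c' →
      N.LRunT (tw.orderedInsert (·.2 ≤ ·.2) x) c c' ∧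
        N.equiv ((tw.orderedInsert (·.2 ≤ ·.2) x).map Prod.fst) (x.1 :: tw.map Prod.fst)
  | [], _, _, h => ⟨h, .refl _⟩
  | y :: tw, ⟨q, v⟩, c', h => by
    by_cases hxy : x.2 ≤ y.2
    · rw [List.orderedInsert_cons, if_pos hxy]
      exact ⟨h, .refl _⟩
    have hdisj := h.disjoint_dom_of_lt (not_le.mp hxy)
    cases h.swap hdisj with
    | @cons _ _ _ _ _ _ c₁ _ hd hb hθ h =>
    obtain ⟨hrun, hequiv⟩ := LRunT.orderedInsert h
    rw [List.orderedInsert_cons, if_neg hxy]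
    exact ⟨.cons hd hb hθ hrun,
      (equiv_cons y.1 hequiv).trans (.swap [] _ y.1 x.1 hdisj.symm)⟩

lemma LRunT.insertionSort :
    ∀ {tw : List (N.Act × ℝ)} {c c' : N.State × N.LVal}, N.LRunT tw c c' →
      N.LRunT (tw.insertionSort (·.2 ≤ ·.2)) c c' ∧
        N.equiv ((tw.insertionSort (·.2 ≤ ·.2)).map Prod.fst) (tw.map Prod.fst)
  | [], _, _, h => ⟨h, .refl _⟩
  | x :: tw, ⟨q, v⟩, c', h => by
    cases h with
    | @cons _ _ _ _ _ _ c₁ _ hd hb hθ h =>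
    obtain ⟨hrun, hequiv⟩ := LRunT.insertionSort h
    obtain ⟨hrun', hequiv'⟩ := LRunT.orderedInsert (.cons hd hb hθ hrun)
    exact ⟨hrun', hequiv'.trans (equiv_cons _ hequiv)⟩

lemma LRun.exists_LRunT {u : List N.Act} {c c' : N.State × N.LVal} (h : N.LRun u c c') :
    ∃ tw : List (N.Act × ℝ), tw.map Prod.fst = u ∧ N.LRunT tw c c' := by
  induction h with
  | nil hd => exact ⟨[], rfl, .nil hd⟩
  | @cons b u q v v₁ c₁ c₂ hd hb _ ih =>
    obtain ⟨tw, rfl, hrun⟩ := ih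
    -- an action with empty domain gets an arbitrary execution time
    by_cases hne : (N.dom b).Nonempty
    · obtain ⟨p₀, hp₀⟩ := hne
      exact ⟨(b, v₁ (.inr p₀)) :: tw, rfl,
        .cons hd hb (fun p hp => hb.choose_spec.2.2.1 p hp p₀ hp₀) hrun⟩
    · exact ⟨(b, 0) :: tw, rfl, .cons hd hb (fun p hp => absurd ⟨p, hp⟩ hne) hrun⟩

end Network

theorem stmt3_general (N : Network) (u : List N.Act) (q : N.State) (v : N.LVal)
    (q' : N.State) (v' : N.LVal)
    (hr : N.LRun u (q, v) (q', v')) :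
    ∃ tw : List (N.Act × ℝ), N.equiv (tw.map Prod.fst) u ∧
      List.Chain' (· ≤ ·) (tw.map Prod.snd) ∧
      N.LRunT tw (q, v) (q', v') := by
  obtain ⟨tw, rfl, hrun⟩ := hr.exists_LRunT
  obtain ⟨hsorted, hequiv⟩ := hrun.insertionSort
  have : Std.Total fun x y : N.Act × ℝ => x.2 ≤ y.2 := ⟨fun x y => le_total x.2 y.2⟩
  have : IsTrans (N.Act × ℝ) fun x y => x.2 ≤ y.2 := ⟨fun _ _ _ => le_trans⟩
  refine ⟨_, hequiv, List.isChain_iff_pairwise.mpr ?_, hsorted⟩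
  exact List.pairwise_map.mpr (List.pairwise_insertionSort _ tw)

theorem stmt3 (N : Network) (u : List N.Act) (q : N.State) (v : N.LVal)
    (hv : N.IsLVal v) (q' : N.State) (v' : N.LVal)
    (hr : N.LRun u (q, v) (q', v')) :
    ∃ tw : List (N.Act × ℝ), N.equiv (tw.map Prod.fst) u ∧
      List.Chain' (· ≤ ·) (tw.map Prod.snd) ∧
      N.LRunT tw (q, v) (q', v') :=
  stmt3_general N u q v q' v' hr
end

section
/- If (q,v) -u-> (q',v') is a global run, then (q, local(v)) =u=> (q', local(v')) is a local run, where local(v) is the synchronized local valuation corresponding to v. -/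
open Classical

namespace Network

variable {N : Network}

theorem synchronized_toLocal (v : N.GVal) : N.Synchronized (N.toLocal v) :=
  fun _ _ => rfl

theorem lgsat_toLocal_iff (v : N.GVal) (g : Guard N.Clock) :
    N.lgsat (N.toLocal v) g ↔ N.ggsat v g :=
  Iff.rfl

theorem toLocal_greset (R : Set N.Clock) (v : N.GVal) :
    N.toLocal (N.greset R v) = N.lreset R (N.toLocal v) := by
  funext y
  cases y <;> rfl

theorem ldelayed_toLocal_gdelay (v : N.GVal) {δ : ℝ} (hδ : 0 ≤ δ) :
    N.ldelayed (N.toLocal v) (N.toLocal (N.gdelay v δ)) := by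
  refine ⟨fun _ => δ, fun _ => hδ, ?_⟩
  funext y
  cases y <;> rfl

theorem lact_toLocal_of_gact {b : N.Act} {c c' : N.State × N.GVal} (h : N.gact b c c') :
    N.lact b (c.1, N.toLocal c.2) (c'.1, N.toLocal c'.2) := by
  obtain ⟨tr, htr, hidle, hguard, hreset⟩ := h
  refine ⟨tr, htr, hidle, fun p _ p' _ => synchronized_toLocal c.2 p p',
    fun p hp => (lgsat_toLocal_iff c.2 _).2 (hguard p hp), ?_⟩
  rw [hreset, toLocal_greset]

theorem lrun_toLocal_of_grun {u : List N.Act} {c c' : N.State × N.GVal} (h : N.GRun u c c') :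
    N.LRun u (c.1, N.toLocal c.2) (c'.1, N.toLocal c'.2) := by
  induction h with
  | nil δ hδ => exact .nil (ldelayed_toLocal_gdelay _ hδ)
  | cons δ hδ hb _ ih => exact .cons (ldelayed_toLocal_gdelay _ hδ) (lact_toLocal_of_gact hb) ih

end Network

theorem stmt5 (N : Network) (u : List N.Act) (q q' : N.State) (v v' : N.GVal)
    (hr : N.GRun u (q, v) (q', v')) :
    N.LRun u (q, N.toLocal v) (q', N.toLocal v') :=
  Network.lrun_toLocal_of_grun hr
end
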